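/- arXiv:1405.5753 — 2 statements merged into one kernel-verified Lean document; each statement's English description precedes it below -/
import Mathlib

section
/- Consider the discrete-time Markov chain X = (X_1, …, X_N) on ℤ_{≥0}^N modeling N parallel homogeneous queues with infinite buffers: every queue has the same strictly positive Poisson arrival rate λ > 0, and the state-dependent service rates μ_i : ℤ_{≥0}^N → (0, ∞) are bounded and permutation-equivariant (for every permutation σ of {1, …, N} and every state x, μ_{σ(i)}(x ∘ σ⁻¹) = μ_i(x)); from state x the chain jumps to x + e_i with probability λ / D(x) for each i, and to x − e_i with probability μ_i(x) / D(x) for each i with x_i > 0, where D(x) = N·λ + Σ_{i : x_i > 0} μ_i(x). If there exists an index i such that λ > limsup_{x_i → ∞} sup_{x_j : j ≠ i} μ_i(x), then, independently of the initial state, almost surely there exists a time T such that for all t ≥ T one has min_{1 ≤ i ≤ N} X_i(t) > 0 (i.e., the system is eventually saturated: every queue is nonempty from some time on). -/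
open MeasureTheory Filter Function

noncomputable section

/-- The set of backlogged queues (queues with at least one packet) in state `x`. -/
def backlogged {N : ℕ} (x : Fin N → ℕ) : Finset (Fin N) :=
  Finset.univ.filter fun i => 0 < x i

/-- The per-event normalizer `D(x) = ∑_j λ_j + ∑_{j : x_j > 0} μ_j(x)`. -/
def normalizer {N : ℕ} (lam : Fin N → ℝ) (mu : Fin N → (Fin N → ℕ) → ℝ)
    (x : Fin N → ℕ) : ℝ :=
  (∑ j, lam j) + ∑ j ∈ backlogged x, mu j x

/-- One-step transition probabilities of the system of queues: from `x` the chain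
jumps to `x + e_i` with probability `λ_i / D(x)`, and to `x - e_i` (when `x_i > 0`)
with probability `μ_i(x) / D(x)`; all other transitions have probability `0`. -/
def queueKernel {N : ℕ} (lam : Fin N → ℝ) (mu : Fin N → (Fin N → ℕ) → ℝ)
    (x y : Fin N → ℕ) : ℝ :=
  ((∑ i, if y = Function.update x i (x i + 1) then lam i else 0) +
      ∑ i, if 0 < x i ∧ y = Function.update x i (x i - 1) then mu i x else 0) /
    normalizer lam mu x

/-- `P` is the law on path space of a (time-homogeneous) Markov chain with one-step
transition probabilities `queueKernel lam mu`, stated via finite cylinder events. -/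
def IsQueueChain {N : ℕ} (lam : Fin N → ℝ) (mu : Fin N → (Fin N → ℕ) → ℝ)
    (P : Measure (ℕ → Fin N → ℕ)) : Prop :=
  ∀ (path : ℕ → Fin N → ℕ) (t : ℕ),
    P {ω | ∀ s ≤ t + 1, ω s = path s} =
      ENNReal.ofReal (queueKernel lam mu (path t) (path (t + 1))) *
        P {ω | ∀ s ≤ t, ω s = path s}

/-- `sup_{x_j : j ≠ i} μ_i(x)`: the supremum of `μ_i` over all states whose `i`-th
coordinate equals `n`. -/
def supAtLevel {N : ℕ} (mu : Fin N → (Fin N → ℕ) → ℝ) (i : Fin N) (n : ℕ) : ℝ :=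
  ⨆ x : {x : Fin N → ℕ // x i = n}, mu i x.1

/-!
Fix a queue `j`. Above some level `n0` its service rate is at most `ρ λ_j` with `ρ < 1`, so
`ρ ^ (x_j - n0)` decreases in expectation there; below `n0` the queue grows by one with
probability at least `p = λ_j / (∑ λ + N B)` at every step, where `B` bounds the service rates.
Splicing the two gives a function of `x_j` that dominates the probability of reaching
`{x_j = 0}`, and from `x_j = 0` the probability of ever coming back is at most
`β = 1 - p ^ (n0 + 1) (1 - ρ) < 1`. Since cylinder probabilities factor along paths, `k` returns
have probability at most `β ^ k`, so queue `j` is empty only finitely often almost surely.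
Permutation equivariance transfers the hypothesis on queue `i` to every queue.
-/

open scoped ENNReal Classical

section PathWeights

variable {α : Type*}

def pathWeight (K : α → α → ℝ≥0∞) (x : α) : List α → ℝ≥0∞
  | [] => 1
  | y :: w => K x y * pathWeight K y w

def IsFirstHit (Z : Set α) : List α → Prop
  | [] => False
  | y :: w => (y ∈ Z ∧ w = []) ∨ (y ∉ Z ∧ IsFirstHit Z w)

def hitWeight (K : α → α → ℝ≥0∞) (Z : Set α) (x : α) : ℝ≥0∞ :=
  ∑' w : {w // IsFirstHit Z w}, pathWeight K x w

def truncHitWeight (K : α → α → ℝ≥0∞) (Z : Set α) (k : ℕ) (x : α) : ℝ≥0∞ :=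
  ∑' w, if IsFirstHit Z w ∧ w.length ≤ k then pathWeight K x w else 0

variable {K : α → α → ℝ≥0∞} {Z : Set α}

lemma IsFirstHit.ne_nil {w : List α} (h : IsFirstHit Z w) : w ≠ [] := by
  rintro rfl; exact h

lemma IsFirstHit.getLast_mem : ∀ {w : List α} (h : IsFirstHit Z w), w.getLast h.ne_nil ∈ Z
  | [_], .inl ⟨hy, _⟩ => hy
  | _ :: _ :: _, .inr ⟨_, h⟩ => by rw [List.getLast_cons_cons]; exact h.getLast_mem
  | [_], .inr ⟨_, h⟩ => False.elim h

lemma isFirstHit_map_range (f : ℕ → α) :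
    ∀ m, (∀ s < m, f s ∉ Z) → f m ∈ Z → IsFirstHit Z ((List.range (m + 1)).map f)
  | 0, _, hm => .inl ⟨hm, rfl⟩
  | m + 1, hs, hm => by
    rw [List.range_succ_eq_map, List.map_cons, List.map_map]
    exact .inr ⟨hs 0 m.succ_pos,
      isFirstHit_map_range (f ∘ Nat.succ) m (fun s hsm => hs _ (by omega)) hm⟩

lemma tsum_list_eq_tsum_cons (f : List α → ℝ≥0∞) (hf : f [] = 0) :
    ∑' w, f w = ∑' y, ∑' w, f (y :: w) := by
  rw [← ENNReal.tsum_prod (f := fun y w => f (y :: w))]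
  refine (tsum_eq_tsum_of_ne_zero_bij
    (fun p : Function.support fun q : α × List α => f (q.1 :: q.2) => p.1.1 :: p.1.2) ?_ ?_
    fun _ => rfl)
  · rintro ⟨⟨y, w⟩, _⟩ ⟨⟨y', w'⟩, _⟩ h
    simp_all
  · rintro (_ | ⟨y, w⟩) hw
    · exact absurd hf hw
    · exact ⟨⟨(y, w), hw⟩, rfl⟩

lemma truncHitWeight_zero (x : α) : truncHitWeight K Z 0 x = 0 := by
  refine ENNReal.tsum_eq_zero.2 fun w => if_neg fun ⟨hw, hlen⟩ => hw.ne_nil ?_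
  exact List.eq_nil_of_length_eq_zero (Nat.le_zero.1 hlen)

lemma truncHitWeight_succ (k : ℕ) (x : α) :
    truncHitWeight K Z (k + 1) x =
      ∑' y, K x y * if y ∈ Z then 1 else truncHitWeight K Z k y := by
  rw [truncHitWeight, tsum_list_eq_tsum_cons _ (if_neg fun h => h.1)]
  refine tsum_congr fun y => ?_
  by_cases hy : y ∈ Z
  · rw [if_pos hy, tsum_eq_single []]
    · simp [IsFirstHit, pathWeight, hy]
    · intro w hw
      simp [IsFirstHit, hy, hw]
  · simp only [if_neg hy, truncHitWeight, ← ENNReal.tsum_mul_left]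
    refine tsum_congr fun w => ?_
    simp [IsFirstHit, hy, pathWeight, apply_ite (K x y * ·)]

lemma hitWeight_le_of_superharmonic {U : α → ℝ≥0∞} (hZ : ∀ y ∈ Z, 1 ≤ U y)
    (hU : ∀ y ∉ Z, ∑' z, K y z * U z ≤ U y) (x : α) :
    hitWeight K Z x ≤ ∑' y, K x y * U y := by
  have htrunc : ∀ k y, (if y ∈ Z then 1 else truncHitWeight K Z k y) ≤ U y := by
    intro k
    induction k with
    | zero =>
      intro y
      split_ifs with hy
      · exact hZ y hy
      · simp [truncHitWeight_zero]
    | succ k ih =>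
      intro y
      split_ifs with hy
      · exact hZ y hy
      · rw [truncHitWeight_succ]
        exact (ENNReal.tsum_le_tsum fun z => mul_le_mul_right (ih z) _).trans (hU y hy)
  rw [hitWeight, ENNReal.tsum_eq_iSup_sum]
  refine iSup_le fun s => ?_
  let k := s.sup fun w => w.1.length
  calc ∑ w ∈ s, pathWeight K x w.1
      = ∑ w ∈ s, if IsFirstHit Z w.1 ∧ w.1.length ≤ k + 1 then pathWeight K x w.1 else 0 :=
        Finset.sum_congr rfl fun w hw =>
          (if_pos ⟨w.2, (Finset.le_sup (f := fun w => w.1.length) hw).trans k.le_succ⟩).symm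
    _ ≤ truncHitWeight K Z (k + 1) x := (ENNReal.sum_le_tsum s).trans
        (ENNReal.tsum_comp_le_tsum_of_injective Subtype.val_injective _)
    _ ≤ ∑' y, K x y * U y := by
        rw [truncHitWeight_succ]
        exact ENNReal.tsum_le_tsum fun y => mul_le_mul_right (htrunc k y) _

end PathWeights

section PathSpace

variable {α : Type*} {K : α → α → ℝ≥0∞} {Z : Set α}

def pathCylinder (p : List α) : Set (ℕ → α) := {ω | ∀ s < p.length, p[s]? = some (ω s)}

lemma mem_pathCylinder_map_range (ω : ℕ → α) (n : ℕ) :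
    ω ∈ pathCylinder ((List.range n).map ω) := by
  intro s hs
  simp_all

lemma pathCylinder_eq_setOf (q : List α) (f : ℕ → α)
    (hf : ∀ s < q.length, q[s]? = some (f s)) :
    pathCylinder q = {ω | ∀ s < q.length, ω s = f s} := by
  ext ω
  refine forall₂_congr fun s hs => ?_
  rw [hf s hs, Option.some_inj, eq_comm]

-- Trajectories from time `0` stopped at their `k`-th visit to `Z` after time `0`.
def visitPaths (Z : Set α) : ℕ → Set (List α)
  | 0 => Set.range fun x => [x]
  | k + 1 => Set.image2 (· ++ ·) (visitPaths Z k) {w | IsFirstHit Z w}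

lemma ne_nil_of_mem_visitPaths : ∀ {k : ℕ} {p : List α}, p ∈ visitPaths Z k → p ≠ []
  | 0, _, ⟨_, rfl⟩ => List.cons_ne_nil _ _
  | _ + 1, _, ⟨_, _, _, hw, rfl⟩ => List.append_ne_nil_of_right_ne_nil _ hw.ne_nil

lemma getLast_mem_of_mem_visitPaths_succ {k : ℕ} {p : List α} (h : p ∈ visitPaths Z (k + 1)) :
    p.getLast (ne_nil_of_mem_visitPaths h) ∈ Z := by
  obtain ⟨q, _, w, hw, rfl⟩ := h
  rw [List.getLast_append_of_ne_nil _ hw.ne_nil]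
  exact hw.getLast_mem

lemma exists_map_range_mem_visitPaths {ω : ℕ → α} (hω : ∃ᶠ t in atTop, ω t ∈ Z) :
    ∀ k, ∃ t, (List.range (t + 1)).map ω ∈ visitPaths Z k
  | 0 => ⟨0, ω 0, by simp⟩
  | k + 1 => by
    obtain ⟨t, ht⟩ := exists_map_range_mem_visitPaths hω k
    have hnext : ∃ m, ω (t + 1 + m) ∈ Z := by
      obtain ⟨u, htu, hu⟩ := frequently_atTop.1 hω (t + 1)
      exact ⟨u - (t + 1), by rwa [Nat.add_sub_cancel' htu]⟩
    refine ⟨t + 1 + Nat.find hnext, ?_⟩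
    rw [add_assoc, List.range_add, List.map_append, List.map_map]
    exact ⟨_, ht, _, isFirstHit_map_range _ _ (fun s hs => Nat.find_min hnext hs)
      (Nat.find_spec hnext), rfl⟩

variable [MeasurableSpace α] {P : Measure (ℕ → α)}

def IsMarkovChainWith (K : α → α → ℝ≥0∞) (P : Measure (ℕ → α)) : Prop :=
  ∀ (p : List α) (hp : p ≠ []) (y : α),
    P (pathCylinder (p ++ [y])) = K (p.getLast hp) y * P (pathCylinder p)

lemma IsMarkovChainWith.measure_pathCylinder_append (hP : IsMarkovChainWith K P) (w : List α) :
    ∀ (p : List α) (hp : p ≠ []),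
      P (pathCylinder (p ++ w)) = P (pathCylinder p) * pathWeight K (p.getLast hp) w := by
  induction w with
  | nil => simp [pathWeight]
  | cons y w ih =>
    intro p hp
    rw [List.append_cons, ih _ (by simp),
      List.getLast_append_singleton, hP p hp]
    simp only [pathWeight]
    ring

end PathSpace

section Recurrence

variable {α : Type*} [MeasurableSpace α] {K : α → α → ℝ≥0∞} {Z : Set α}
  {P : Measure (ℕ → α)}

def visitWeight (P : Measure (ℕ → α)) (Z : Set α) (k : ℕ) : ℝ≥0∞ :=
  ∑' p : visitPaths Z k, P (pathCylinder p)

lemma visitWeight_zero_le [MeasurableSingletonClass α] [IsProbabilityMeasure P] :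
    visitWeight P Z 0 ≤ 1 := by
  have hcyl : ∀ x : α, pathCylinder [x] = (fun ω : ℕ → α => ω 0) ⁻¹' {x} := by
    intro x
    ext ω
    simp [pathCylinder, eq_comm]
  rw [visitWeight, visitPaths, tsum_range (fun p => P (pathCylinder p)) List.singleton_injective]
  simp only [hcyl]
  calc ∑' x, P ((fun ω : ℕ → α => ω 0) ⁻¹' {x})
      ≤ P (⋃ x, (fun ω : ℕ → α => ω 0) ⁻¹' {x}) :=
        tsum_meas_le_meas_iUnion_of_disjoint P
          (fun x => measurable_pi_apply 0 (measurableSet_singleton x))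
          (fun _ _ hxy => Disjoint.preimage _ (Set.disjoint_singleton.2 hxy))
    _ ≤ 1 := prob_le_one

lemma IsMarkovChainWith.visitWeight_succ_le (hP : IsMarkovChainWith K P) (k : ℕ) :
    visitWeight P Z (k + 1) ≤ ∑' q : visitPaths Z k,
      P (pathCylinder q) * hitWeight K Z (q.1.getLast (ne_nil_of_mem_visitPaths q.2)) := by
  let concat : visitPaths Z k × {w // IsFirstHit Z w} → visitPaths Z (k + 1) :=
    fun z => ⟨z.1.1 ++ z.2.1, Set.mem_image2_of_mem z.1.2 z.2.2⟩
  have hconcat : Function.Surjective concat := by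
    rintro ⟨_, q, hq, w, hw, rfl⟩
    exact ⟨(⟨q, hq⟩, ⟨w, hw⟩), rfl⟩
  calc visitWeight P Z (k + 1)
      ≤ ∑' z, P (pathCylinder (concat z).1) :=
        ENNReal.tsum_le_tsum_comp_of_surjective hconcat fun p => P (pathCylinder p.1)
    _ = _ := by
        refine (ENNReal.tsum_prod (f := fun q w => P (pathCylinder (concat (q, w)).1))).trans
          (tsum_congr fun q => ?_)
        rw [hitWeight, ← ENNReal.tsum_mul_left]
        exact tsum_congr fun w => hP.measure_pathCylinder_append w.1 q.1 _

lemma IsMarkovChainWith.visitWeight_succ_le_pow [MeasurableSingletonClass α]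
    [IsProbabilityMeasure P] (hP : IsMarkovChainWith K P) {β : ℝ≥0∞}
    (hhit : ∀ x, hitWeight K Z x ≤ 1) (hhitZ : ∀ x ∈ Z, hitWeight K Z x ≤ β) :
    ∀ k, visitWeight P Z (k + 1) ≤ β ^ k
  | 0 => calc visitWeight P Z 1
        ≤ ∑' q : visitPaths Z 0, P (pathCylinder q) * 1 :=
          (hP.visitWeight_succ_le 0).trans (ENNReal.tsum_le_tsum fun q => by gcongr; exact hhit _)
      _ ≤ β ^ 0 := by simpa [visitWeight] using visitWeight_zero_le
  | k + 1 => calc visitWeight P Z (k + 2)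
        ≤ ∑' q : visitPaths Z (k + 1), P (pathCylinder q) * β :=
          (hP.visitWeight_succ_le (k + 1)).trans (ENNReal.tsum_le_tsum fun q => by
            gcongr; exact hhitZ _ (getLast_mem_of_mem_visitPaths_succ q.2))
      _ = visitWeight P Z (k + 1) * β := ENNReal.tsum_mul_right
      _ ≤ β ^ (k + 1) := by
          rw [pow_succ]
          gcongr
          exact hP.visitWeight_succ_le_pow hhit hhitZ k

theorem IsMarkovChainWith.measure_frequently_mem_eq_zero [MeasurableSingletonClass α]
    [Countable α] [IsProbabilityMeasure P] (hP : IsMarkovChainWith K P) {β : ℝ≥0∞}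
    (hβ : β < 1) (hhit : ∀ x, hitWeight K Z x ≤ 1)
    (hhitZ : ∀ x ∈ Z, hitWeight K Z x ≤ β) :
    P {ω | ∃ᶠ t in atTop, ω t ∈ Z} = 0 := by
  have hle : ∀ k, P {ω | ∃ᶠ t in atTop, ω t ∈ Z} ≤ β ^ k := fun k =>
    calc P {ω | ∃ᶠ t in atTop, ω t ∈ Z}
        ≤ P (⋃ p : visitPaths Z (k + 1), pathCylinder p) := measure_mono fun ω hω => by
          obtain ⟨t, ht⟩ := exists_map_range_mem_visitPaths hω (k + 1)
          exact Set.mem_iUnion.2 ⟨⟨_, ht⟩, mem_pathCylinder_map_range ω _⟩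
      _ ≤ visitWeight P Z (k + 1) := measure_iUnion_le _
      _ ≤ β ^ k := hP.visitWeight_succ_le_pow hhit hhitZ k
  exact nonpos_iff_eq_zero.1
    (ge_of_tendsto' (ENNReal.tendsto_pow_atTop_nhds_zero_of_lt_one hβ) hle)

end Recurrence

section QueueKernel

variable {N : ℕ} {lam : Fin N → ℝ} {mu : Fin N → (Fin N → ℕ) → ℝ}

def queueTransition (lam : Fin N → ℝ) (mu : Fin N → (Fin N → ℕ) → ℝ)
    (x y : Fin N → ℕ) : ℝ≥0∞ :=
  ENNReal.ofReal (queueKernel lam mu x y)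

lemma IsQueueChain.isMarkovChainWith {P : Measure (ℕ → Fin N → ℕ)}
    (h : IsQueueChain lam mu P) :
    IsMarkovChainWith (queueTransition lam mu) P := by
  intro p hp y
  have hlen : 0 < p.length := List.length_pos_iff.2 hp
  let path : ℕ → Fin N → ℕ := fun s => (p ++ [y]).getD s 0
  have hpath : ∀ s < (p ++ [y]).length, (p ++ [y])[s]? = some (path s) := by
    intro s hs
    show _ = some ((p ++ [y]).getD s 0)
    rw [List.getD_eq_getElem _ _ hs, List.getElem?_eq_getElem hs]
  have hpath' : ∀ s < p.length, p[s]? = some (path s) := by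
    intro s hs
    rw [← List.getElem?_append_left hs]
    exact hpath s (by simp; omega)
  have hlast : path (p.length - 1) = p.getLast hp := by
    simp only [path]
    rw [List.getD_append _ _ _ _ (by omega), List.getD_eq_getElem _ _ (by omega),
      List.getLast_eq_getElem]
  have hnext : path (p.length - 1 + 1) = y := by
    simp [path, Nat.sub_add_cancel hlen]
  have key := h path (p.length - 1)
  rw [hlast, hnext, Nat.sub_add_cancel hlen] at key
  rw [pathCylinder_eq_setOf _ _ hpath, pathCylinder_eq_setOf _ _ hpath', queueTransition]
  convert key using 3 <;> refine Set.ext fun ω => forall_congr' fun s => imp_congr_left ?_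
  · simp
  · omega

lemma normalizer_nonneg (hlam : ∀ l, 0 ≤ lam l) (hmu : ∀ l x, 0 ≤ mu l x)
    (x : Fin N → ℕ) :
    0 ≤ normalizer lam mu x :=
  add_nonneg (Finset.sum_nonneg fun l _ => hlam l) (Finset.sum_nonneg fun l _ => hmu l x)

lemma queueKernel_nonneg (hlam : ∀ l, 0 ≤ lam l) (hmu : ∀ l x, 0 ≤ mu l x)
    (x y : Fin N → ℕ) :
    0 ≤ queueKernel lam mu x y := by
  unfold queueKernel
  refine div_nonneg (add_nonneg (Finset.sum_nonneg fun l _ => ?_) (Finset.sum_nonneg fun l _ => ?_))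
    (normalizer_nonneg hlam hmu x)
  · split_ifs <;> simp [hlam l]
  · split_ifs <;> simp [hmu l x]

lemma tsum_queueTransition_mul_ofReal (hlam : ∀ l, 0 ≤ lam l) (hmu : ∀ l x, 0 ≤ mu l x)
    (x : Fin N → ℕ) (f : (Fin N → ℕ) → ℝ) (hf : ∀ y, 0 ≤ f y) :
    ∑' y, queueTransition lam mu x y * ENNReal.ofReal (f y) =
      ENNReal.ofReal ((∑ i, lam i * f (update x i (x i + 1)) +
        ∑ i ∈ backlogged x, mu i x * f (update x i (x i - 1))) / normalizer lam mu x) := by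
  let T := Finset.univ.image (fun i => update x i (x i + 1)) ∪
    Finset.univ.image (fun i => update x i (x i - 1))
  have hT : ∀ y ∉ T, queueKernel lam mu x y = 0 := by
    intro y hy
    simp only [T, Finset.mem_union, Finset.mem_image, Finset.mem_univ, true_and, not_or,
      not_exists] at hy
    simp [queueKernel, fun i => Ne.symm (hy.1 i), fun i => Ne.symm (hy.2 i)]
  have hupT : ∀ i, update x i (x i + 1) ∈ T := fun i =>
    Finset.mem_union_left _ (Finset.mem_image_of_mem _ (Finset.mem_univ i))
  have hdownT : ∀ i, update x i (x i - 1) ∈ T := fun i =>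
    Finset.mem_union_right _ (Finset.mem_image_of_mem _ (Finset.mem_univ i))
  calc ∑' y, queueTransition lam mu x y * ENNReal.ofReal (f y)
      = ∑ y ∈ T, ENNReal.ofReal (queueKernel lam mu x y * f y) := by
        simp only [queueTransition, ← ENNReal.ofReal_mul (queueKernel_nonneg hlam hmu x _)]
        exact tsum_eq_sum fun y hy => by simp [hT y hy]
    _ = ENNReal.ofReal (∑ y ∈ T, queueKernel lam mu x y * f y) :=
        (ENNReal.ofReal_sum_of_nonneg fun y _ =>
          mul_nonneg (queueKernel_nonneg hlam hmu x y) (hf y)).symm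
    _ = _ := by
        congr 1
        simp only [queueKernel, div_mul_eq_mul_div, ← Finset.sum_div, add_mul,
          Finset.sum_add_distrib, Finset.sum_mul, ite_mul, zero_mul]
        rw [Finset.sum_comm, Finset.sum_comm (s := T)]
        simp [Finset.sum_ite_eq', hupT, hdownT, backlogged, Finset.sum_filter, ite_and]

lemma sum_mul_comp_update_apply (s : Finset (Fin N)) (g : Fin N → ℝ) (h : ℕ → ℝ)
    (x v : Fin N → ℕ) (j : Fin N) :
    ∑ i ∈ s, g i * h (update x i (v i) j) =
      (∑ i ∈ s, g i) * h (x j) + if j ∈ s then g j * (h (v j) - h (x j)) else 0 := by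
  rw [Finset.sum_mul, ← Finset.sum_ite_eq' s j fun i => g i * (h (v i) - h (x j)),
    ← Finset.sum_add_distrib]
  refine Finset.sum_congr rfl fun i _ => ?_
  rcases eq_or_ne i j with rfl | hij
  · simp only [update_self, if_true]
    ring
  · simp [hij, Ne.symm hij]

lemma tsum_queueTransition_mul_comp_apply (hlam : ∀ l, 0 ≤ lam l) (hmu : ∀ l x, 0 ≤ mu l x)
    (x : Fin N → ℕ) (hD : 0 < normalizer lam mu x) (h : ℕ → ℝ) (hh : ∀ n, 0 ≤ h n)
    (j : Fin N) :
    ∑' y, queueTransition lam mu x y * ENNReal.ofReal (h (y j)) =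
      ENNReal.ofReal (h (x j) + (lam j * (h (x j + 1) - h (x j)) +
        if 0 < x j then mu j x * (h (x j - 1) - h (x j)) else 0) / normalizer lam mu x) := by
  rw [tsum_queueTransition_mul_ofReal hlam hmu x (fun y => h (y j)) fun y => hh _,
    sum_mul_comp_update_apply, sum_mul_comp_update_apply]
  have hj : j ∈ backlogged x ↔ 0 < x j := by simp [backlogged]
  simp only [Finset.mem_univ, if_true, hj]
  congr 1
  field_simp
  rw [normalizer]
  ring

end QueueKernel

section HitBound

-- Below `n0` the queue can climb straight to `n0 + 1` (probability `≥ p` per step) and then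
-- escape to infinity (probability `≥ 1 - ρ`); above `n0`, `ρ ^ (n - n0)` is the gambler's-ruin
-- bound.
def hitBound (p ρ : ℝ) (n0 n : ℕ) : ℝ :=
  if n = 0 then 1 else if n ≤ n0 then 1 - p ^ (n0 + 1 - n) * (1 - ρ) else ρ ^ (n - n0)

variable {p ρ : ℝ} {n0 n : ℕ}

lemma hitBound_zero : hitBound p ρ n0 0 = 1 := if_pos rfl

lemma one_sub_hitBound (hn : 1 ≤ n) (hn0 : n ≤ n0 + 1) :
    1 - hitBound p ρ n0 n = p ^ (n0 + 1 - n) * (1 - ρ) := by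
  unfold hitBound
  split_ifs with h0 h1
  · omega
  · ring
  · rw [show n0 + 1 - n = 0 by omega, show n - n0 = 1 by omega]
    ring

lemma hitBound_of_lt (h : n0 < n) : hitBound p ρ n0 n = ρ ^ (n - n0) := by
  unfold hitBound
  rw [if_neg (by omega), if_neg (by omega)]

lemma hitBound_nonneg (hp0 : 0 ≤ p) (hp1 : p ≤ 1) (hρ0 : 0 ≤ ρ) (hρ1 : ρ ≤ 1)
    (n : ℕ) : 0 ≤ hitBound p ρ n0 n := by
  unfold hitBound
  split_ifs
  · exact zero_le_one
  · nlinarith [pow_le_one₀ hp0 hp1 (n := n0 + 1 - n)]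
  · positivity

lemma hitBound_le_one (hp0 : 0 ≤ p) (hρ0 : 0 ≤ ρ) (hρ1 : ρ ≤ 1) (n : ℕ) :
    hitBound p ρ n0 n ≤ 1 := by
  unfold hitBound
  split_ifs
  · exact le_rfl
  · nlinarith [pow_nonneg hp0 (n0 + 1 - n)]
  · exact pow_le_one₀ hρ0 hρ1

lemma hitBound_drift_nonpos_of_le (hp0 : 0 ≤ p) (hρ0 : 0 ≤ ρ) (hρ1 : ρ ≤ 1) (hn : 1 ≤ n)
    (hn0 : n ≤ n0) {u d : ℝ} (hd : 0 ≤ d) (hpud : p * (u + d) ≤ u) :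
    u * (hitBound p ρ n0 (n + 1) - hitBound p ρ n0 n) +
      d * (hitBound p ρ n0 (n - 1) - hitBound p ρ n0 n) ≤ 0 := by
  set e := p ^ (n0 - n) * (1 - ρ)
  have h1 := one_sub_hitBound (p := p) (ρ := ρ) hn (show n ≤ n0 + 1 by omega)
  have h2 := one_sub_hitBound (p := p) (ρ := ρ) (show 1 ≤ n + 1 by omega)
    (show n + 1 ≤ n0 + 1 by omega)
  rw [show n0 + 1 - n = n0 - n + 1 by omega, pow_succ] at h1
  rw [show n0 + 1 - (n + 1) = n0 - n by omega] at h2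
  have hup : hitBound p ρ n0 (n + 1) - hitBound p ρ n0 n = e * (p - 1) := by
    linear_combination h1 - h2
  have hdown : hitBound p ρ n0 (n - 1) - hitBound p ρ n0 n ≤ e * p := by
    linarith [hitBound_le_one hp0 hρ0 hρ1 (n0 := n0) (n - 1)]
  have he : 0 ≤ e := mul_nonneg (pow_nonneg hp0 _) (by linarith)
  rw [hup]
  nlinarith [mul_le_mul_of_nonneg_left hdown hd]

lemma hitBound_drift_nonpos_of_lt (hp0 : 0 ≤ p) (hρ0 : 0 ≤ ρ) (hρ1 : ρ ≤ 1) (hn0 : n0 < n)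
    {u d : ℝ} (hd : 0 ≤ d) (hdu : d ≤ ρ * u) :
    u * (hitBound p ρ n0 (n + 1) - hitBound p ρ n0 n) +
      d * (hitBound p ρ n0 (n - 1) - hitBound p ρ n0 n) ≤ 0 := by
  set e := ρ ^ (n - 1 - n0)
  have hcur : hitBound p ρ n0 n = e * ρ := by
    rw [hitBound_of_lt hn0, show n - n0 = n - 1 - n0 + 1 by omega, pow_succ]
  have hup : hitBound p ρ n0 (n + 1) = e * ρ * ρ := by
    rw [hitBound_of_lt (by omega), show n + 1 - n0 = n - 1 - n0 + 1 + 1 by omega, pow_succ,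
      pow_succ]
  have hdown : hitBound p ρ n0 (n - 1) ≤ e := by
    rcases eq_or_lt_of_le (show n0 ≤ n - 1 by omega) with h | h
    · simpa [e, ← h] using hitBound_le_one hp0 hρ0 hρ1 (n0 := n0) (n - 1)
    · exact (hitBound_of_lt h).le
  have he : 0 ≤ e * (1 - ρ) := mul_nonneg (pow_nonneg hρ0 _) (sub_nonneg.2 hρ1)
  rw [hcur, hup]
  nlinarith [mul_le_mul_of_nonneg_left hdown hd, mul_le_mul_of_nonneg_left hdu he]

lemma hitBound_return_le (hp0 : 0 ≤ p) (hρ1 : ρ ≤ 1) {a : ℝ} (hpa : p ≤ a) :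
    1 + a * (hitBound p ρ n0 1 - 1) ≤ 1 - p ^ (n0 + 1) * (1 - ρ) := by
  have h1 := one_sub_hitBound (p := p) (ρ := ρ) (n0 := n0) (n := 1) le_rfl (by omega)
  rw [Nat.add_sub_cancel] at h1
  rw [pow_succ]
  nlinarith [mul_le_mul_of_nonneg_left hpa (mul_nonneg (pow_nonneg hp0 n0) (sub_nonneg.2 hρ1))]

end HitBound

section QueueRecurrence

variable {N : ℕ} {lam : Fin N → ℝ} {mu : Fin N → (Fin N → ℕ) → ℝ} {B : ℝ}

lemma lam_add_le_normalizer (hlam : ∀ l, 0 ≤ lam l) (hmu : ∀ l x, 0 ≤ mu l x)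
    (x : Fin N → ℕ) (j : Fin N) :
    lam j + (if 0 < x j then mu j x else 0) ≤ normalizer lam mu x := by
  refine add_le_add (Finset.single_le_sum (fun l _ => hlam l) (Finset.mem_univ j)) ?_
  split_ifs with hj
  · exact Finset.single_le_sum (fun l _ => hmu l x) (by simpa [backlogged] using hj)
  · exact Finset.sum_nonneg fun l _ => hmu l x

lemma normalizer_le (hB : ∀ l x, mu l x ≤ B) (hB0 : 0 ≤ B) (x : Fin N → ℕ) :
    normalizer lam mu x ≤ ∑ l, lam l + N * B := by
  have hsum := Finset.sum_le_card_nsmul (backlogged x) (fun l => mu l x) B fun l _ => hB l x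
  have hcard : ((backlogged x).card : ℝ) ≤ N := by
    exact_mod_cast (Finset.card_le_univ _).trans_eq (Fintype.card_fin N)
  rw [nsmul_eq_mul] at hsum
  unfold normalizer
  nlinarith

variable {p ρ : ℝ} {n0 : ℕ} {j : Fin N}
variable (hlam : ∀ l, 0 < lam l) (hmu : ∀ l x, 0 ≤ mu l x) (hp0 : 0 ≤ p) (hp1 : p ≤ 1)
  (hρ0 : 0 ≤ ρ) (hρ1 : ρ ≤ 1) (hpD : ∀ x, p * normalizer lam mu x ≤ lam j)
include hlam hmu hp0 hp1 hρ0 hρ1 hpD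

lemma tsum_queueTransition_mul_hitBound_le (x : Fin N → ℕ) (hx : x j ≠ 0)
    (hslow : n0 < x j → mu j x ≤ ρ * lam j) :
    ∑' y, queueTransition lam mu x y * ENNReal.ofReal (hitBound p ρ n0 (y j)) ≤
      ENNReal.ofReal (hitBound p ρ n0 (x j)) := by
  have hxj : 0 < x j := Nat.pos_of_ne_zero hx
  have hD := lam_add_le_normalizer (fun l => (hlam l).le) hmu x j
  rw [if_pos hxj] at hD
  have hDpos : 0 < normalizer lam mu x := by linarith [hlam j, hmu j x]
  rw [tsum_queueTransition_mul_comp_apply (fun l => (hlam l).le) hmu x hDpos _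
    (hitBound_nonneg hp0 hp1 hρ0 hρ1) j, if_pos hxj]
  refine ENNReal.ofReal_le_ofReal
    (add_le_of_nonpos_right (div_nonpos_of_nonpos_of_nonneg ?_ hDpos.le))
  rcases le_or_gt (x j) n0 with hlow | hhigh
  · exact hitBound_drift_nonpos_of_le hp0 hρ0 hρ1 hxj hlow (hmu j x) (by nlinarith [hpD x])
  · exact hitBound_drift_nonpos_of_lt hp0 hρ0 hρ1 hhigh (hmu j x) (hslow hhigh)

lemma tsum_queueTransition_mul_hitBound_le_of_eq_zero (x : Fin N → ℕ) (hx : x j = 0) :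
    ∑' y, queueTransition lam mu x y * ENNReal.ofReal (hitBound p ρ n0 (y j)) ≤
      ENNReal.ofReal (1 - p ^ (n0 + 1) * (1 - ρ)) := by
  have hD := lam_add_le_normalizer (fun l => (hlam l).le) hmu x j
  rw [hx, if_neg (lt_irrefl 0), add_zero] at hD
  have hDpos : 0 < normalizer lam mu x := (hlam j).trans_le hD
  rw [tsum_queueTransition_mul_comp_apply (fun l => (hlam l).le) hmu x hDpos _
    (hitBound_nonneg hp0 hp1 hρ0 hρ1) j, hx, if_neg (lt_irrefl 0), add_zero, zero_add]
  refine ENNReal.ofReal_le_ofReal (le_trans (le_of_eq ?_) (hitBound_return_le hp0 hρ1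
    ((le_div_iff₀ hDpos).2 (hpD x))))
  rw [hitBound_zero]
  ring

lemma hitWeight_queueTransition_le (hslow : ∀ x, n0 < x j → mu j x ≤ ρ * lam j)
    (x : Fin N → ℕ) :
    hitWeight (queueTransition lam mu) {y | y j = 0} x ≤
      if x j = 0 then ENNReal.ofReal (1 - p ^ (n0 + 1) * (1 - ρ)) else 1 := by
  refine (hitWeight_le_of_superharmonic (U := fun y => ENNReal.ofReal (hitBound p ρ n0 (y j)))
    (fun y hy => by simp [show y j = 0 from hy, hitBound_zero]) (fun y hy =>
      tsum_queueTransition_mul_hitBound_le hlam hmu hp0 hp1 hρ0 hρ1 hpD y hy (hslow y)) x).trans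
    ?_
  split_ifs with hx
  · exact tsum_queueTransition_mul_hitBound_le_of_eq_zero hlam hmu hp0 hp1 hρ0 hρ1 hpD x hx
  · exact (tsum_queueTransition_mul_hitBound_le hlam hmu hp0 hp1 hρ0 hρ1 hpD x hx
      (hslow x)).trans (ENNReal.ofReal_le_one.2 (hitBound_le_one hp0 hρ0 hρ1 _))

end QueueRecurrence

theorem IsQueueChain.measure_frequently_empty_eq_zero {N : ℕ} {lam : Fin N → ℝ}
    {mu : Fin N → (Fin N → ℕ) → ℝ} {P : Measure (ℕ → Fin N → ℕ)}
    [IsProbabilityMeasure P] (hchain : IsQueueChain lam mu P) (hlam : ∀ l, 0 < lam l)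
    (hmu : ∀ l x, 0 ≤ mu l x) {B : ℝ} (hB : ∀ l x, mu l x ≤ B) {j : Fin N} {ρ : ℝ}
    (hρ0 : 0 ≤ ρ) (hρ1 : ρ < 1) {n0 : ℕ}
    (hslow : ∀ x, n0 < x j → mu j x ≤ ρ * lam j) :
    P {ω | ∃ᶠ t in atTop, ω t j = 0} = 0 := by
  have hB0 : 0 ≤ B := (hmu j 0).trans (hB j 0)
  have hM : lam j ≤ ∑ l, lam l + N * B := le_add_of_le_of_nonneg
    (Finset.single_le_sum (fun l _ => (hlam l).le) (Finset.mem_univ j)) (by positivity)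
  have hMpos : 0 < ∑ l, lam l + N * B := (hlam j).trans_le hM
  set p := lam j / (∑ l, lam l + N * B)
  have hp0 : 0 < p := div_pos (hlam j) hMpos
  have hp1 : p ≤ 1 := (div_le_one hMpos).2 hM
  have hpD : ∀ x, p * normalizer lam mu x ≤ lam j := fun x =>
    calc p * normalizer lam mu x ≤ p * (∑ l, lam l + N * B) :=
          mul_le_mul_of_nonneg_left (normalizer_le hB hB0 x) hp0.le
      _ = lam j := div_mul_cancel₀ _ hMpos.ne'
  have hβ : ENNReal.ofReal (1 - p ^ (n0 + 1) * (1 - ρ)) < 1 := by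
    rw [ENNReal.ofReal_lt_one]
    have : 0 < p ^ (n0 + 1) * (1 - ρ) := mul_pos (pow_pos hp0 _) (by linarith)
    linarith
  have hhit := hitWeight_queueTransition_le hlam hmu hp0.le hp1 hρ0 hρ1.le hpD hslow
  exact hchain.isMarkovChainWith.measure_frequently_mem_eq_zero hβ
    (fun x => (hhit x).trans (by split_ifs; exacts [hβ.le, le_rfl]))
    (fun x hx => (hhit x).trans_eq (if_pos hx))

section ServiceLevels

variable {N : ℕ} {mu : Fin N → (Fin N → ℕ) → ℝ} {B : ℝ}

lemma bddAbove_range_mu (hB : ∀ l x, mu l x ≤ B) (i : Fin N) (n : ℕ) :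
    BddAbove (Set.range fun x : {x : Fin N → ℕ // x i = n} => mu i x.1) :=
  ⟨B, by rintro _ ⟨x, rfl⟩; exact hB i x.1⟩

lemma le_supAtLevel (hB : ∀ l x, mu l x ≤ B) (i : Fin N) (x : Fin N → ℕ) :
    mu i x ≤ supAtLevel mu i (x i) :=
  le_ciSup (bddAbove_range_mu hB i (x i)) ⟨x, rfl⟩

lemma supAtLevel_le (hB : ∀ l x, mu l x ≤ B) (i : Fin N) (n : ℕ) : supAtLevel mu i n ≤ B :=
  have : Nonempty {x : Fin N → ℕ // x i = n} := ⟨⟨fun _ => n, rfl⟩⟩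
  ciSup_le fun x => hB i x.1

lemma supAtLevel_le_of_equivariant (hB : ∀ l x, mu l x ≤ B)
    (hmu_equiv : ∀ (σ : Equiv.Perm (Fin N)) (x : Fin N → ℕ) (i : Fin N),
      mu (σ i) (x ∘ ⇑σ.symm) = mu i x)
    (a b : Fin N) (n : ℕ) : supAtLevel mu a n ≤ supAtLevel mu b n := by
  have : Nonempty {x : Fin N → ℕ // x a = n} := ⟨⟨fun _ => n, rfl⟩⟩
  refine ciSup_le fun ⟨x, hx⟩ => ?_
  rw [← hmu_equiv (Equiv.swap a b) x a, Equiv.swap_apply_left]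
  exact le_ciSup (bddAbove_range_mu hB b n) ⟨_, by simp [Equiv.symm_swap, hx]⟩

lemma exists_service_le_of_limsup_lt {lam : ℝ} (hlam : 0 < lam) (hB : ∀ l x, mu l x ≤ B)
    (hmu_equiv : ∀ (σ : Equiv.Perm (Fin N)) (x : Fin N → ℕ) (i : Fin N),
      mu (σ i) (x ∘ ⇑σ.symm) = mu i x)
    {i : Fin N} (hlimsup : limsup (supAtLevel mu i) atTop < lam) :
    ∃ ρ, 0 ≤ ρ ∧ ρ < 1 ∧ ∃ n0 : ℕ, ∀ j x, n0 < x j → mu j x ≤ ρ * lam := by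
  obtain ⟨c, hLc, hc⟩ := exists_between hlimsup
  obtain ⟨n0, hn0⟩ := eventually_atTop.1 <| eventually_lt_of_limsup_lt hLc <|
    isBoundedUnder_of ⟨B, supAtLevel_le hB i⟩
  refine ⟨max (c / lam) 0, le_max_right _ _, max_lt ((div_lt_one hlam).2 hc) one_pos, n0,
    fun j x hx => ?_⟩
  calc mu j x ≤ supAtLevel mu i (x j) :=
        (le_supAtLevel hB j x).trans (supAtLevel_le_of_equivariant hB hmu_equiv j i _)
    _ ≤ c := (hn0 _ hx.le).le
    _ ≤ max (c / lam) 0 * lam := by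
        rw [max_mul_of_nonneg _ _ hlam.le, div_mul_cancel₀ _ hlam.ne']
        exact le_max_left _ _

end ServiceLevels

lemma measure_eventually_forall_pos_eq_one {N : ℕ} {P : Measure (ℕ → Fin N → ℕ)}
    [IsProbabilityMeasure P] (h : ∀ j, P {ω | ∃ᶠ t in atTop, ω t j = 0} = 0) :
    P {ω | ∃ T : ℕ, ∀ t ≥ T, ∀ j : Fin N, 0 < ω t j} = 1 := by
  refine (measure_congr (ae_eq_univ.2 (measure_mono_null ?_ (measure_iUnion_null h)))).trans
    measure_univ
  intro ω hω
  contrapose! hω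
  simp only [Set.mem_iUnion, Set.mem_ofPred_eq, not_exists, not_frequently] at hω
  simpa [Nat.pos_iff_ne_zero] using eventually_atTop.1 (eventually_all.2 hω)

theorem eventually_saturated_general
    {N : ℕ} (lam : ℝ) (hlam : 0 < lam)
    (mu : Fin N → (Fin N → ℕ) → ℝ)
    (hmu_pos : ∀ i x, 0 < mu i x)
    (hmu_bdd : ∃ B : ℝ, ∀ i x, mu i x ≤ B)
    (hmu_equiv : ∀ (σ : Equiv.Perm (Fin N)) (x : Fin N → ℕ) (i : Fin N),
      mu (σ i) (x ∘ ⇑σ.symm) = mu i x)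
    (P : Measure (ℕ → Fin N → ℕ)) [IsProbabilityMeasure P]
    (hchain : IsQueueChain (fun _ => lam) mu P)
    (i : Fin N)
    (hlimsup : limsup (supAtLevel mu i) atTop < lam) :
    P {ω | ∃ T : ℕ, ∀ t ≥ T, ∀ j : Fin N, 0 < ω t j} = 1 := by
  obtain ⟨B, hB⟩ := hmu_bdd
  obtain ⟨ρ, hρ0, hρ1, n0, hslow⟩ := exists_service_le_of_limsup_lt hlam hB hmu_equiv hlimsup
  exact measure_eventually_forall_pos_eq_one fun j =>
    hchain.measure_frequently_empty_eq_zero (fun _ => hlam) (fun l x => (hmu_pos l x).le) hB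
      hρ0 hρ1 (hslow j)

/-- For `N` parallel homogeneous queues (common strictly positive
arrival rate `λ`, bounded strictly positive permutation-equivariant service rates
`μ_i`), if some queue `i` satisfies `λ > limsup_{x_i → ∞} sup_{x_j : j ≠ i} μ_i(x)`,
then — independently of the initial state (no restriction is placed on the initial
distribution) — almost surely there is a time `T` from which on every queue is
nonempty, i.e. the system is eventually saturated. -/
theorem eventually_saturated
    {N : ℕ} (hN : 0 < N) (lam : ℝ) (hlam : 0 < lam)
    (mu : Fin N → (Fin N → ℕ) → ℝ)
    (hmu_pos : ∀ i x, 0 < mu i x)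
    (hmu_bdd : ∃ B : ℝ, ∀ i x, mu i x ≤ B)
    (hmu_equiv : ∀ (σ : Equiv.Perm (Fin N)) (x : Fin N → ℕ) (i : Fin N),
      mu (σ i) (x ∘ ⇑σ.symm) = mu i x)
    (P : Measure (ℕ → Fin N → ℕ)) [IsProbabilityMeasure P]
    (hchain : IsQueueChain (fun _ => lam) mu P)
    (i : Fin N)
    (hlimsup : limsup (supAtLevel mu i) atTop < lam) :
    P {ω | ∃ T : ℕ, ∀ t ≥ T, ∀ j : Fin N, 0 < ω t j} = 1 :=
  eventually_saturated_general lam hlam mu hmu_pos hmu_bdd hmu_equiv P hchain i hlimsup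
end
end

section
/- Consider the discrete-time Markov chain X = (X_1, …, X_N) on ℤ_{≥0}^N modeling N parallel queues with infinite buffers, strictly positive arrival rates λ_i > 0 and bounded state-dependent service rates μ_i : ℤ_{≥0}^N → (0, ∞), with per-event transition probabilities P(x ↦ x + e_i) = λ_i / D(x) and, when x_i > 0, P(x ↦ x − e_i) = μ_i(x) / D(x), where D(x) = Σ_j λ_j + Σ_{j : x_j > 0} μ_j(x). If queue i satisfies λ_i > limsup_{x_i → ∞} sup_{x_j : j ≠ i} μ_i(x), then queue i is unstable: for any initial state, almost surely X_i(t) → ∞ as t → ∞; in particular, almost surely there exists T such that X_i(t) > 0 for all t ≥ T. -/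
open MeasureTheory Filter Function

noncomputable section

/-!
Fix a level `L` above which `μ_i ≤ ρ λ_i` with `ρ < 1`. Off `{x_i ≤ L}` the function
`x ↦ ρ ^ (x_i - L)` is superharmonic for the chain, so from a state with `x_i = L + k` the chain
ever returns to `{x_i ≤ L}` with probability at most `ρ ^ k`. From any state in `{x_i ≤ L}`,
`L + 1` consecutive arrivals at queue `i` (each of probability at least some `a > 0`, as the
rates are bounded) lead to a state from which the chain escapes forever with probability at
least `1 - ρ`. Hence each visit to `{x_i ≤ L}` is followed by another with probability at most
`1 - (1 - ρ) a ^ (L + 1) < 1`, and infinitely many visits are null. The strong Markov property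
at the successive visits is replaced by decomposing events into cylinders over path prefixes.
-/

open Set
open scoped ENNReal Topology

lemma measure_iUnion_inter_le {Ω ι : Type*} [MeasurableSpace Ω] [Countable ι] {μ : Measure Ω}
    {E : ι → Set Ω} {A : Set Ω} {C : ℝ≥0∞} (hE : ∀ j, MeasurableSet (E j))
    (hd : Pairwise (Disjoint on E)) (h : ∀ j, μ (E j ∩ A) ≤ C * μ (E j)) :
    μ ((⋃ j, E j) ∩ A) ≤ C * μ (⋃ j, E j) :=
  calc μ ((⋃ j, E j) ∩ A) ≤ ∑' j, μ (E j ∩ A) := by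
        rw [iUnion_inter]; exact measure_iUnion_le _
    _ ≤ ∑' j, C * μ (E j) := ENNReal.tsum_le_tsum h
    _ = C * μ (⋃ j, E j) := by rw [ENNReal.tsum_mul_left, measure_iUnion hd hE]

namespace PathSpace

variable {S : Type*}

def cyl (π : ℕ → S) (t : ℕ) : Set (ℕ → S) := {ω | ∀ u ≤ t, ω u = π u}

def hitsFrom (G : Set S) (s : ℕ) : Set (ℕ → S) := {ω | ∃ k, ω (s + k) ∈ G}

def visitsInfOften (G : Set S) : Set (ℕ → S) := {ω | ∃ᶠ t in atTop, ω t ∈ G}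

lemma mem_cyl_self (π : ℕ → S) (t : ℕ) : π ∈ cyl π t := fun _ _ => rfl

lemma cyl_congr {π π' : ℕ → S} {t : ℕ} (h : ∀ u ≤ t, π u = π' u) : cyl π t = cyl π' t := by
  ext ω
  exact forall₂_congr fun u hu => by rw [h u hu]

lemma cyl_subset_cyl {π σ : ℕ → S} {s t : ℕ} (hst : s ≤ t) (h : ∀ u ≤ s, σ u = π u) :
    cyl σ t ⊆ cyl π s :=
  fun _ hω u hu => (hω u (hu.trans hst)).trans (h u hu)

lemma mem_cyl_update_succ {π ω : ℕ → S} {s : ℕ} (hω : ω ∈ cyl π s) :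
    ω ∈ cyl (update π (s + 1) (ω (s + 1))) (s + 1) := by
  intro u hu
  rcases Nat.lt_or_eq_of_le hu with hu | rfl
  · rw [update_of_ne hu.ne, hω u (Nat.lt_succ_iff.1 hu)]
  · rw [update_self]

lemma visitsInfOften_subset_hitsFrom (G : Set S) (s : ℕ) : visitsInfOften G ⊆ hitsFrom G s :=
  fun ω hω => by
    obtain ⟨u, hsu, hu⟩ := Frequently.forall_exists_of_atTop hω s
    exact ⟨u - s, by rwa [Nat.add_sub_cancel' hsu]⟩

lemma dependsOn_mem_of_imp {F : Set (ℕ → S)} {t : ℕ}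
    (h : ∀ ω ω', (∀ u ≤ t, ω u = ω' u) → ω ∈ F → ω' ∈ F) : DependsOn (· ∈ F) (Iic t) :=
  fun ω ω' hωω' => propext ⟨h ω ω' hωω', h ω' ω fun u hu => (hωω' u hu).symm⟩

lemma dependsOn_mem_cyl (π : ℕ → S) {s t : ℕ} (hst : s ≤ t) : DependsOn (· ∈ cyl π s) (Iic t) :=
  dependsOn_mem_of_imp fun _ _ h hω u hu => (h u (hu.trans hst)).symm.trans (hω u hu)

lemma dependsOn_mem_diff {F F' : Set (ℕ → S)} {t : ℕ} (hF : DependsOn (· ∈ F) (Iic t))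
    (hF' : DependsOn (· ∈ F') (Iic t)) : DependsOn (· ∈ F \ F') (Iic t) :=
  fun _ _ h => by simp only [Set.mem_sdiff, hF h, hF' h]

-- Indexing cylinders at time `t` by the countable type `Fin (t + 1) → S`.
def prefixPath (t : ℕ) (p : Fin (t + 1) → S) : ℕ → S := fun u => p ⟨min u t, by omega⟩

lemma cyl_prefixPath (ω : ℕ → S) (t : ℕ) : cyl (prefixPath t fun u => ω u) t = cyl ω t :=
  cyl_congr fun u hu => by simp [prefixPath, min_eq_left hu]

lemma pairwise_disjoint_cyl_prefixPath (t : ℕ) :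
    Pairwise (Disjoint on fun p : Fin (t + 1) → S => cyl (prefixPath t p) t) := by
  intro p q hpq
  obtain ⟨u, hu⟩ := Function.ne_iff.1 hpq
  refine disjoint_left.2 fun ω hp hq => hu ?_
  simpa [prefixPath, min_eq_left u.is_le] using (hp u u.is_le).symm.trans (hq u u.is_le)

lemma iUnion_cyl_prefixPath_of_dependsOn {F : Set (ℕ → S)} {t : ℕ}
    (hF : DependsOn (· ∈ F) (Iic t)) :
    ⋃ p : {p : Fin (t + 1) → S // cyl (prefixPath t p) t ⊆ F}, cyl (prefixPath t p.1) t = F := by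
  refine Subset.antisymm (iUnion_subset fun p => p.2) fun ω hω =>
    mem_iUnion.2 ⟨⟨fun u => ω u, ?_⟩, ?_⟩ <;> rw [cyl_prefixPath]
  · exact fun ω' hω' => (hF fun u hu => (hω' u hu).symm).mp hω
  · exact mem_cyl_self ω t

variable [MeasurableSpace S] {P : Measure (ℕ → S)}

-- `IsQueueChain lam mu` unfolds to `IsMarkovChain (queueKernel lam mu)`.
def IsMarkovChain (Q : S → S → ℝ) (P : Measure (ℕ → S)) : Prop :=
  ∀ (path : ℕ → S) (t : ℕ),
    P (cyl path (t + 1)) = ENNReal.ofReal (Q (path t) (path (t + 1))) * P (cyl path t)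

namespace IsMarkovChain

variable {Q : S → S → ℝ}

lemma measure_cyl_update_succ (hP : IsMarkovChain Q P) (π : ℕ → S) (s : ℕ) (y : S) :
    P (cyl (update π (s + 1) y) (s + 1)) = ENNReal.ofReal (Q (π s) y) * P (cyl π s) := by
  have hs : ∀ u ≤ s, update π (s + 1) y u = π u := fun u hu => update_of_ne (by omega) _ _
  rw [hP, update_self, hs s le_rfl, cyl_congr hs]

lemma pow_mul_measure_cyl_le (hP : IsMarkovChain Q P) {c : ℝ≥0∞} (π : ℕ → S) (s : ℕ) :
    ∀ K, (∀ k < K, c ≤ ENNReal.ofReal (Q (π (s + k)) (π (s + k + 1)))) →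
      c ^ K * P (cyl π s) ≤ P (cyl π (s + K))
  | 0, _ => by simp
  | K + 1, hc => by
    rw [← add_assoc, hP, pow_succ', mul_assoc]
    exact mul_le_mul' (hc K K.lt_succ_self)
      (hP.pow_mul_measure_cyl_le π s K fun k hk => hc k (hk.trans K.lt_succ_self))

variable [Countable S] {G : Set S} {h : S → ℝ≥0∞}

lemma measure_cyl_inter_hitsWithin_le (hP : IsMarkovChain Q P) (hG : ∀ x ∈ G, 1 ≤ h x)
    (hh : ∀ x ∉ G, ∑' y, ENNReal.ofReal (Q x y) * h y ≤ h x) (T : ℕ) (π : ℕ → S) (s : ℕ) :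
    P (cyl π s ∩ {ω | ∃ k ≤ T, ω (s + k) ∈ G}) ≤ h (π s) * P (cyl π s) := by
  have hmem : ∀ (π : ℕ → S) (s : ℕ) (E : Set (ℕ → S)), π s ∈ G →
      P (cyl π s ∩ E) ≤ h (π s) * P (cyl π s) := fun π s _ hs =>
    (measure_mono inter_subset_left).trans (le_mul_of_one_le_left' (hG _ hs))
  induction T generalizing π s with
  | zero =>
    by_cases hs : π s ∈ G
    · exact hmem π s _ hs
    have hempty : cyl π s ∩ {ω | ∃ k ≤ 0, ω (s + k) ∈ G} = ∅ := by
      refine eq_empty_of_forall_notMem ?_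
      rintro ω ⟨hω, k, hk, hkG⟩
      obtain rfl := Nat.le_zero.1 hk
      exact hs (hω s le_rfl ▸ hkG)
    rw [hempty, measure_empty]
    exact zero_le
  | succ T ih =>
    by_cases hs : π s ∈ G
    · exact hmem π s _ hs
    have hcover : cyl π s ∩ {ω | ∃ k ≤ T + 1, ω (s + k) ∈ G} ⊆
        ⋃ y, cyl (update π (s + 1) y) (s + 1) ∩ {ω | ∃ k ≤ T, ω (s + 1 + k) ∈ G} := by
      rintro ω ⟨hω, k, hk, hkG⟩
      refine mem_iUnion.2 ⟨ω (s + 1), mem_cyl_update_succ hω, k - 1, by omega, ?_⟩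
      rcases k with _ | k
      · exact absurd (hω s le_rfl ▸ hkG) hs
      · simpa [Nat.add_right_comm, Nat.add_assoc] using hkG
    calc P (cyl π s ∩ {ω | ∃ k ≤ T + 1, ω (s + k) ∈ G})
        ≤ ∑' y, P (cyl (update π (s + 1) y) (s + 1) ∩ {ω | ∃ k ≤ T, ω (s + 1 + k) ∈ G}) :=
          (measure_mono hcover).trans (measure_iUnion_le _)
      _ ≤ ∑' y, h y * (ENNReal.ofReal (Q (π s) y) * P (cyl π s)) := by
          refine ENNReal.tsum_le_tsum fun y => ?_
          simpa [hP.measure_cyl_update_succ] using ih (update π (s + 1) y) (s + 1)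
      _ = (∑' y, ENNReal.ofReal (Q (π s) y) * h y) * P (cyl π s) := by
          rw [← ENNReal.tsum_mul_right]; congr 1; ext y; ring
      _ ≤ h (π s) * P (cyl π s) := by gcongr; exact hh _ hs

lemma measure_cyl_inter_hitsFrom_le (hP : IsMarkovChain Q P) (hG : ∀ x ∈ G, 1 ≤ h x)
    (hh : ∀ x ∉ G, ∑' y, ENNReal.ofReal (Q x y) * h y ≤ h x) (π : ℕ → S) (s : ℕ) :
    P (cyl π s ∩ hitsFrom G s) ≤ h (π s) * P (cyl π s) := by
  have hU : cyl π s ∩ hitsFrom G s = ⋃ T, cyl π s ∩ {ω | ∃ k ≤ T, ω (s + k) ∈ G} := by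
    ext ω
    simp only [hitsFrom, mem_inter_iff, mem_iUnion, mem_ofPred_eq]
    exact ⟨fun ⟨hω, k, hk⟩ => ⟨k, hω, k, le_rfl, hk⟩, fun ⟨_, hω, k, _, hk⟩ => ⟨hω, k, hk⟩⟩
  have hmono : Monotone fun T => cyl π s ∩ {ω | ∃ k ≤ T, ω (s + k) ∈ G} :=
    fun _ _ hT => inter_subset_inter_right _ fun _ ⟨k, hk, hkG⟩ => ⟨k, hk.trans hT, hkG⟩
  rw [hU, hmono.measure_iUnion]
  exact iSup_le fun T => hP.measure_cyl_inter_hitsWithin_le hG hh T π s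

end IsMarkovChain

variable [MeasurableSingletonClass S]

lemma measurableSet_cyl (π : ℕ → S) (t : ℕ) : MeasurableSet (cyl π t) := by
  have : cyl π t = ⋂ u ∈ Iic t, (fun ω : ℕ → S => ω u) ⁻¹' {π u} := by ext; simp [cyl]
  rw [this]
  exact .biInter (to_countable _) fun u _ => measurable_pi_apply u (measurableSet_singleton _)

variable [Countable S]

lemma measurableSet_hitsFrom (G : Set S) (s : ℕ) : MeasurableSet (hitsFrom G s) := by
  have : hitsFrom G s = ⋃ k, (fun ω : ℕ → S => ω (s + k)) ⁻¹' G := by ext; simp [hitsFrom]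
  rw [this]
  exact .iUnion fun k => measurable_pi_apply (s + k) G.to_countable.measurableSet

lemma measurableSet_of_dependsOn {F : Set (ℕ → S)} {t : ℕ} (hF : DependsOn (· ∈ F) (Iic t)) :
    MeasurableSet F := by
  rw [← iUnion_cyl_prefixPath_of_dependsOn hF]
  exact .iUnion fun _ => measurableSet_cyl _ _

lemma measure_inter_le_of_dependsOn {F A : Set (ℕ → S)} {t : ℕ} {C : ℝ≥0∞}
    (hF : DependsOn (· ∈ F) (Iic t))
    (h : ∀ π, cyl π t ⊆ F → P (cyl π t ∩ A) ≤ C * P (cyl π t)) : P (F ∩ A) ≤ C * P F := by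
  rw [← iUnion_cyl_prefixPath_of_dependsOn hF]
  exact measure_iUnion_inter_le (fun _ => measurableSet_cyl _ _)
    ((pairwise_disjoint_cyl_prefixPath t).comp_of_injective Subtype.val_injective) fun p => h _ p.2

lemma measure_cyl_inter_hitsFrom_inter_le {G : Set S} {A : Set (ℕ → S)} {C : ℝ≥0∞}
    (hG : ∀ t (π : ℕ → S), π t ∈ G → P (cyl π t ∩ A) ≤ C * P (cyl π t)) (π : ℕ → S) (s : ℕ) :
    P (cyl π s ∩ hitsFrom G s ∩ A) ≤ C * P (cyl π s ∩ hitsFrom G s) := by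
  classical
  set F : ℕ → Set (ℕ → S) := fun k => cyl π s ∩ {ω | ω (s + k) ∈ G ∧ ∀ j < k, ω (s + j) ∉ G}
  have hU : cyl π s ∩ hitsFrom G s = ⋃ k, F k := by
    ext ω
    simp only [F, hitsFrom, mem_inter_iff, mem_iUnion, mem_ofPred_eq]
    refine ⟨fun ⟨hω, hk⟩ => ⟨Nat.find hk, hω, Nat.find_spec hk, fun j => Nat.find_min hk⟩,
      fun ⟨k, hω, hk, _⟩ => ⟨hω, k, hk⟩⟩
  have hdep : ∀ k, DependsOn (· ∈ F k) (Iic (s + k)) := fun k =>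
    dependsOn_mem_of_imp fun ω ω' h ⟨hω, hk, hj⟩ =>
      ⟨(dependsOn_mem_cyl π (Nat.le_add_right s k) h).mp hω, h (s + k) le_rfl ▸ hk,
        fun j hjk => h (s + j) (by omega) ▸ hj j hjk⟩
  have hdisj : Pairwise (Disjoint on F) := by
    intro k k' hkk'
    wlog hlt : k < k' generalizing k k'
    · exact (this hkk'.symm (by omega)).symm
    exact disjoint_left.2 fun ω hk hk' => hk'.2.2 k hlt hk.2.1
  rw [hU]
  exact measure_iUnion_inter_le (fun k => measurableSet_of_dependsOn (hdep k)) hdisj fun k =>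
    measure_inter_le_of_dependsOn (hdep k) fun π' hπ' => hG _ _ (hπ' (mem_cyl_self π' _)).2.1

section Transience

variable [IsFiniteMeasure P] {G : Set S} {ε C : ℝ≥0∞}

lemma measure_cyl_inter_visitsInfOften_le_of_escape {π σ : ℕ → S} {s K : ℕ}
    (hσ : ∀ u ≤ s, σ u = π u)
    (hesc : ε * P (cyl π s) ≤ P (cyl σ (s + K) \ hitsFrom G (s + K)))
    (hC : ∀ t (π : ℕ → S), P (cyl π t ∩ visitsInfOften G) ≤ C * P (cyl π t)) :
    P (cyl π s ∩ visitsInfOften G) ≤ (1 - ε) * C * P (cyl π s) := by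
  set U := cyl σ (s + K)
  set H := hitsFrom G (s + K)
  have hUsub : U ⊆ cyl π s := cyl_subset_cyl (Nat.le_add_right s K) hσ
  have hcover : cyl π s ∩ visitsInfOften G ⊆
      ((cyl π s \ U) ∩ visitsInfOften G) ∪ (U ∩ H ∩ visitsInfOften G) := by
    rintro ω ⟨hω, hA⟩
    by_cases hU : ω ∈ U
    · exact Or.inr ⟨⟨hU, visitsInfOften_subset_hitsFrom G _ hA⟩, hA⟩
    · exact Or.inl ⟨⟨hω, hU⟩, hA⟩
  have hstay : P ((cyl π s \ U) ∩ visitsInfOften G) ≤ C * P (cyl π s \ U) :=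
    measure_inter_le_of_dependsOn
      (dependsOn_mem_diff (dependsOn_mem_cyl π (Nat.le_add_right s K)) (dependsOn_mem_cyl σ le_rfl))
      fun π' _ => hC _ π'
  have hreturn : P (U ∩ H ∩ visitsInfOften G) ≤ C * P (U ∩ H) :=
    measure_cyl_inter_hitsFrom_inter_le (fun t π' _ => hC t π') σ (s + K)
  have hsplit : P (cyl π s \ U) + P (U ∩ H) = P (cyl π s \ (U \ H)) := by
    rw [← measure_union (disjoint_sdiff_left.mono_right inter_subset_left)
      ((measurableSet_cyl σ _).inter (measurableSet_hitsFrom G _))]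
    congr 1
    ext ω
    have := @hUsub ω
    simp only [mem_union, Set.mem_sdiff, mem_inter_iff]
    tauto
  calc P (cyl π s ∩ visitsInfOften G)
      ≤ C * P (cyl π s \ U) + C * P (U ∩ H) :=
        (measure_mono hcover).trans ((measure_union_le _ _).trans (add_le_add hstay hreturn))
    _ = C * (P (cyl π s) - P (U \ H)) := by
        rw [← mul_add, hsplit, measure_sdiff (sdiff_subset.trans hUsub)
          ((measurableSet_cyl σ _).diff (measurableSet_hitsFrom G _)).nullMeasurableSet
          (measure_ne_top _ _)]
    _ ≤ C * (P (cyl π s) - ε * P (cyl π s)) := by gcongr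
    _ = (1 - ε) * C * P (cyl π s) := by
        rw [mul_comm (1 - ε), mul_assoc, ENNReal.sub_mul fun _ _ => measure_ne_top _ _, one_mul]

theorem measure_visitsInfOften_eq_zero (hε : ε ≠ 0)
    (hesc : ∀ (s : ℕ) (π : ℕ → S), π s ∈ G → ∃ (σ : ℕ → S) (K : ℕ), (∀ u ≤ s, σ u = π u) ∧
      ε * P (cyl π s) ≤ P (cyl σ (s + K) \ hitsFrom G (s + K))) :
    P (visitsInfOften G) = 0 := by
  have hstep : ∀ C : ℝ≥0∞, (∀ t π, P (cyl π t ∩ visitsInfOften G) ≤ C * P (cyl π t)) →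
      ∀ t π, P (cyl π t ∩ visitsInfOften G) ≤ (1 - ε) * C * P (cyl π t) := by
    intro C hC t π
    have hlow : ∀ s (π' : ℕ → S), π' s ∈ G →
        P (cyl π' s ∩ visitsInfOften G) ≤ (1 - ε) * C * P (cyl π' s) := fun s π' hs => by
      obtain ⟨σ, K, hσ, hσesc⟩ := hesc s π' hs
      exact measure_cyl_inter_visitsInfOften_le_of_escape hσ hσesc hC
    calc P (cyl π t ∩ visitsInfOften G) = P (cyl π t ∩ hitsFrom G t ∩ visitsInfOften G) := by
          rw [inter_assoc, inter_eq_right.2 (visitsInfOften_subset_hitsFrom G t)]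
      _ ≤ (1 - ε) * C * P (cyl π t ∩ hitsFrom G t) := measure_cyl_inter_hitsFrom_inter_le hlow π t
      _ ≤ (1 - ε) * C * P (cyl π t) := by gcongr; exact inter_subset_left
  have hpow : ∀ n t π, P (cyl π t ∩ visitsInfOften G) ≤ (1 - ε) ^ n * P (cyl π t) := by
    intro n
    induction n with
    | zero => simpa using fun t π => measure_mono inter_subset_left
    | succ n ih => simpa only [pow_succ'] using hstep _ ih
  have hbound : ∀ n, P (visitsInfOften G) ≤ (1 - ε) ^ n * P univ := fun n => by
    simpa using measure_inter_le_of_dependsOn (t := 0) (F := univ) (fun _ _ _ => rfl)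
      fun π _ => hpow n 0 π
  have hlim : Tendsto (fun n => (1 - ε) ^ n * P univ) atTop (𝓝 0) := by
    simpa using ENNReal.Tendsto.mul_const (ENNReal.tendsto_pow_atTop_nhds_zero_of_lt_one
      (ENNReal.sub_lt_self ENNReal.one_ne_top one_ne_zero hε)) (.inr (measure_ne_top P univ))
  exact le_antisymm (ge_of_tendsto' hlim hbound) zero_le

end Transience

end PathSpace

namespace QueueChain

open PathSpace

variable {N : ℕ} {lam : Fin N → ℝ} {mu : Fin N → (Fin N → ℕ) → ℝ}

def up (x : Fin N → ℕ) (j : Fin N) : Fin N → ℕ := update x j (x j + 1)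

def down (x : Fin N → ℕ) (j : Fin N) : Fin N → ℕ := update x j (x j - 1)

def nbrs (x : Fin N → ℕ) : Finset (Fin N → ℕ) :=
  Finset.univ.image (up x) ∪ (backlogged x).image (down x)

lemma up_apply_self (x : Fin N → ℕ) (j : Fin N) : up x j j = x j + 1 := update_self ..

lemma up_apply_of_ne (x : Fin N → ℕ) {j k : Fin N} (h : k ≠ j) : up x j k = x k :=
  update_of_ne h ..

lemma down_apply_self (x : Fin N → ℕ) (j : Fin N) : down x j j = x j - 1 := update_self ..

lemma down_apply_of_ne (x : Fin N → ℕ) {j k : Fin N} (h : k ≠ j) : down x j k = x k :=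
  update_of_ne h ..

lemma down_apply_le (x : Fin N → ℕ) (j k : Fin N) : down x j k ≤ x k := by
  rcases eq_or_ne k j with rfl | h
  · rw [down_apply_self]; exact Nat.sub_le _ _
  · rw [down_apply_of_ne x h]

lemma up_ne_down (x : Fin N → ℕ) (j k : Fin N) : up x j ≠ down x k := fun h => by
  have := congrFun h j
  rw [up_apply_self] at this
  exact absurd (down_apply_le x k j) (by omega)

lemma up_injective (x : Fin N → ℕ) : Injective (up x) := fun j k h => by
  by_contra hjk
  have := congrFun h j
  rw [up_apply_self, up_apply_of_ne x hjk] at this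
  omega

lemma mem_backlogged {x : Fin N → ℕ} {j : Fin N} : j ∈ backlogged x ↔ 0 < x j := by
  simp [backlogged]

lemma down_injOn (x : Fin N → ℕ) : Set.InjOn (down x) (backlogged x) := fun j hj k _ h => by
  by_contra hjk
  have := congrFun h j
  rw [down_apply_self, down_apply_of_ne x hjk] at this
  have := mem_backlogged.1 hj
  omega

lemma queueKernel_up (x : Fin N → ℕ) (j : Fin N) :
    queueKernel lam mu x (up x j) = lam j / normalizer lam mu x := by
  have harr : ∀ k, up x j = update x k (x k + 1) ↔ j = k := fun k => (up_injective x).eq_iff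
  have hdep : ∀ k, ¬(0 < x k ∧ up x j = update x k (x k - 1)) := fun k h => up_ne_down x j k h.2
  simp only [queueKernel, harr, hdep, Finset.sum_ite_eq, Finset.mem_univ, if_true, if_false,
    Finset.sum_const_zero, add_zero]

lemma queueKernel_down {x : Fin N → ℕ} {j : Fin N} (hj : 0 < x j) :
    queueKernel lam mu x (down x j) = mu j x / normalizer lam mu x := by
  have harr : ∀ k, ¬down x j = update x k (x k + 1) := fun k h => up_ne_down x k j h.symm
  have hdep : ∀ k, (0 < x k ∧ down x j = update x k (x k - 1)) ↔ j = k := fun k =>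
    ⟨fun h => down_injOn x (mem_backlogged.2 hj) (mem_backlogged.2 h.1) h.2,
      by rintro rfl; exact ⟨hj, rfl⟩⟩
  simp only [queueKernel, harr, hdep, Finset.sum_ite_eq, Finset.mem_univ, if_true, if_false,
    Finset.sum_const_zero, zero_add]

lemma queueKernel_of_notMem_nbrs {x y : Fin N → ℕ} (hy : y ∉ nbrs x) :
    queueKernel lam mu x y = 0 := by
  have harr : ∀ k, ¬y = update x k (x k + 1) := fun k h =>
    hy (Finset.mem_union_left _ (Finset.mem_image.2 ⟨k, Finset.mem_univ k, h.symm⟩))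
  have hdep : ∀ k, ¬(0 < x k ∧ y = update x k (x k - 1)) := fun k h =>
    hy (Finset.mem_union_right _ (Finset.mem_image.2 ⟨k, mem_backlogged.2 h.1, h.2.symm⟩))
  simp only [queueKernel, harr, hdep, if_false, Finset.sum_const_zero, add_zero, zero_div]

lemma lam_le_normalizer (hlam : ∀ j, 0 ≤ lam j) (hmu : ∀ j x, 0 ≤ mu j x) (i : Fin N)
    (x : Fin N → ℕ) : lam i ≤ normalizer lam mu x :=
  le_add_of_le_of_nonneg (Finset.single_le_sum (fun j _ => hlam j) (Finset.mem_univ i))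
    (Finset.sum_nonneg fun j _ => hmu j x)

lemma normalizer_le (hmu : ∀ j x, 0 ≤ mu j x) {B : ℝ} (hB : ∀ j x, mu j x ≤ B) (x : Fin N → ℕ) :
    normalizer lam mu x ≤ ∑ j, lam j + N * B := by
  have : ∑ j ∈ backlogged x, mu j x ≤ ∑ j, mu j x :=
    Finset.sum_le_sum_of_subset_of_nonneg (Finset.subset_univ _) fun j _ _ => hmu j x
  have := this.trans (Finset.sum_le_card_nsmul _ _ B fun j _ => hB j x)
  simp only [Finset.card_univ, Fintype.card_fin, nsmul_eq_mul] at this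
  exact add_le_add_right this _

lemma queueKernel_nonneg (hlam : ∀ j, 0 ≤ lam j) (hmu : ∀ j x, 0 ≤ mu j x) (x y : Fin N → ℕ) :
    0 ≤ queueKernel lam mu x y := by
  unfold queueKernel
  refine div_nonneg (add_nonneg ?_ ?_) (add_nonneg (Finset.sum_nonneg fun j _ => hlam j)
    (Finset.sum_nonneg fun j _ => hmu j x)) <;>
    exact Finset.sum_nonneg fun k _ => by split_ifs <;> simp [hlam, hmu]

lemma sum_nbrs_queueKernel_mul (x : Fin N → ℕ) (f : (Fin N → ℕ) → ℝ) :
    ∑ y ∈ nbrs x, queueKernel lam mu x y * f y =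
      (∑ j, lam j * f (up x j) + ∑ j ∈ backlogged x, mu j x * f (down x j)) /
        normalizer lam mu x := by
  have hdisj : Disjoint (Finset.univ.image (up x)) ((backlogged x).image (down x)) :=
    Finset.disjoint_left.2 fun y hy hy' => by
      obtain ⟨j, -, rfl⟩ := Finset.mem_image.1 hy
      obtain ⟨k, -, hk⟩ := Finset.mem_image.1 hy'
      exact up_ne_down x j k hk.symm
  rw [nbrs, Finset.sum_union hdisj, Finset.sum_image (up_injective x).injOn,
    Finset.sum_image (down_injOn x), add_div, Finset.sum_div, Finset.sum_div]
  congr 1 <;> refine Finset.sum_congr rfl fun j hj => ?_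
  · rw [queueKernel_up]; ring
  · rw [queueKernel_down (mem_backlogged.1 hj)]; ring

lemma sum_nbrs_queueKernel_mul_comp_apply (hlam : ∀ j, 0 < lam j) (hmu : ∀ j x, 0 ≤ mu j x)
    {i : Fin N} {x : Fin N → ℕ} (hx : 0 < x i) (g : ℕ → ℝ) :
    ∑ y ∈ nbrs x, queueKernel lam mu x y * g (y i) = g (x i) +
      (lam i * (g (x i + 1) - g (x i)) + mu i x * (g (x i - 1) - g (x i))) /
        normalizer lam mu x := by
  have hD := ((hlam i).trans_le (lam_le_normalizer (fun j => (hlam j).le) hmu i x)).ne'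
  have harr : ∑ j, lam j * (g (up x j i) - g (x i)) = lam i * (g (x i + 1) - g (x i)) := by
    rw [Finset.sum_eq_single i (fun j _ hj => by rw [up_apply_of_ne x (Ne.symm hj), sub_self,
      mul_zero]) (by simp), up_apply_self]
  have hdep : ∑ j ∈ backlogged x, mu j x * (g (down x j i) - g (x i)) =
      mu i x * (g (x i - 1) - g (x i)) := by
    rw [Finset.sum_eq_single_of_mem i (mem_backlogged.2 hx) fun j _ hj => by
      rw [down_apply_of_ne x (Ne.symm hj), sub_self, mul_zero], down_apply_self]
  rw [sum_nbrs_queueKernel_mul, ← harr, ← hdep]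
  simp only [mul_sub, Finset.sum_sub_distrib, ← Finset.sum_mul]
  field_simp
  simp only [normalizer]
  ring

lemma sum_nbrs_queueKernel_mul_pow_le (hlam : ∀ j, 0 < lam j) (hmu : ∀ j x, 0 ≤ mu j x)
    {i : Fin N} {ρ : ℝ} (hρ0 : 0 ≤ ρ) (hρ1 : ρ ≤ 1) {L : ℕ} {x : Fin N → ℕ} (hx : L < x i)
    (hmuρ : mu i x ≤ ρ * lam i) :
    ∑ y ∈ nbrs x, queueKernel lam mu x y * ρ ^ (y i - L) ≤ ρ ^ (x i - L) := by
  rw [sum_nbrs_queueKernel_mul_comp_apply hlam hmu (by omega) fun n => ρ ^ (n - L)]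
  refine add_le_of_nonpos_right (div_nonpos_of_nonpos_of_nonneg ?_
    ((hlam i).le.trans (lam_le_normalizer (fun j => (hlam j).le) hmu i x)))
  obtain ⟨k, hk⟩ : ∃ k, x i - L = k + 1 := ⟨x i - L - 1, by omega⟩
  have hup : x i + 1 - L = k + 2 := by omega
  have hdown : x i - 1 - L = k := by omega
  simp only [hk, hup, hdown, pow_succ]
  have hk0 := pow_nonneg hρ0 k
  nlinarith [mul_nonneg (mul_nonneg hk0 (sub_nonneg.2 hρ1)) (sub_nonneg.2 hmuρ)]

lemma tsum_ofReal_queueKernel_mul (hlam : ∀ j, 0 ≤ lam j) (hmu : ∀ j x, 0 ≤ mu j x)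
    (x : Fin N → ℕ) {f : (Fin N → ℕ) → ℝ} (hf : ∀ y, 0 ≤ f y) :
    ∑' y, ENNReal.ofReal (queueKernel lam mu x y) * ENNReal.ofReal (f y) =
      ENNReal.ofReal (∑ y ∈ nbrs x, queueKernel lam mu x y * f y) := by
  rw [tsum_eq_sum fun y hy => by rw [queueKernel_of_notMem_nbrs hy, ENNReal.ofReal_zero, zero_mul],
    ENNReal.ofReal_sum_of_nonneg fun y _ => mul_nonneg (queueKernel_nonneg hlam hmu x y) (hf y)]
  exact Finset.sum_congr rfl fun y _ => (ENNReal.ofReal_mul (queueKernel_nonneg hlam hmu x y)).symm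

lemma measure_cyl_inter_hitsFrom_le_pow {P : Measure (ℕ → Fin N → ℕ)}
    (hchain : IsQueueChain lam mu P) (hlam : ∀ j, 0 < lam j) (hmu : ∀ j x, 0 ≤ mu j x)
    {i : Fin N} {ρ : ℝ} (hρ0 : 0 ≤ ρ) (hρ1 : ρ ≤ 1) {L : ℕ}
    (hmuρ : ∀ x : Fin N → ℕ, L < x i → mu i x ≤ ρ * lam i)
    (π : ℕ → Fin N → ℕ) (s : ℕ) :
    P (cyl π s ∩ hitsFrom {x | x i ≤ L} s) ≤ ENNReal.ofReal (ρ ^ (π s i - L)) * P (cyl π s) :=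
  IsMarkovChain.measure_cyl_inter_hitsFrom_le (h := fun x => ENNReal.ofReal (ρ ^ (x i - L))) hchain
    (fun x hx => by simp [Nat.sub_eq_zero_of_le (show x i ≤ L from hx)])
    (fun x hx => by
      rw [tsum_ofReal_queueKernel_mul (fun j => (hlam j).le) hmu x fun y => pow_nonneg hρ0 _]
      exact ENNReal.ofReal_le_ofReal (sum_nbrs_queueKernel_mul_pow_le hlam hmu hρ0 hρ1
        (not_le.1 hx) (hmuρ x (not_le.1 hx)))) π s

lemma exists_pos_le_queueKernel_up (hlam : ∀ j, 0 < lam j) (hmu : ∀ j x, 0 ≤ mu j x) {B : ℝ}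
    (hB : ∀ j x, mu j x ≤ B) (i : Fin N) :
    ∃ a > 0, ∀ x : Fin N → ℕ, a ≤ queueKernel lam mu x (up x i) := by
  have hpos : ∀ x, 0 < normalizer lam mu x := fun x =>
    (hlam i).trans_le (lam_le_normalizer (fun j => (hlam j).le) hmu i x)
  refine ⟨lam i / (∑ j, lam j + N * B), div_pos (hlam i) ((hpos 0).trans_le
    (normalizer_le hmu hB 0)), fun x => ?_⟩
  rw [queueKernel_up]
  exact div_le_div_of_nonneg_left (hlam i).le (hpos x) (normalizer_le hmu hB x)

def climb (π : ℕ → Fin N → ℕ) (s : ℕ) (i : Fin N) : ℕ → Fin N → ℕ :=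
  fun u => if u ≤ s then π u else update (π s) i (π s i + (u - s))

lemma climb_of_le (π : ℕ → Fin N → ℕ) (i : Fin N) {s u : ℕ} (hu : u ≤ s) :
    climb π s i u = π u := if_pos hu

lemma climb_add (π : ℕ → Fin N → ℕ) (s : ℕ) (i : Fin N) (k : ℕ) :
    climb π s i (s + k) = update (π s) i (π s i + k) := by
  unfold climb
  split_ifs with h
  · obtain rfl : k = 0 := by omega
    simp
  · rw [Nat.add_sub_cancel_left]

lemma climb_add_succ (π : ℕ → Fin N → ℕ) (s : ℕ) (i : Fin N) (k : ℕ) :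
    climb π s i (s + k + 1) = up (climb π s i (s + k)) i := by
  rw [climb_add, add_assoc, climb_add, up, update_idem, update_self, add_assoc]

lemma le_measure_climb_sdiff_hitsFrom {P : Measure (ℕ → Fin N → ℕ)} [IsFiniteMeasure P]
    (hchain : IsQueueChain lam mu P) (hlam : ∀ j, 0 < lam j) (hmu : ∀ j x, 0 ≤ mu j x)
    {i : Fin N} {a : ℝ} (ha : ∀ x : Fin N → ℕ, a ≤ queueKernel lam mu x (up x i)) {ρ : ℝ}
    (hρ0 : 0 ≤ ρ) (hρ1 : ρ ≤ 1) {L : ℕ} (hmuρ : ∀ x : Fin N → ℕ, L < x i → mu i x ≤ ρ * lam i)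
    (π : ℕ → Fin N → ℕ) (s : ℕ) :
    (1 - ENNReal.ofReal ρ) * ENNReal.ofReal a ^ (L + 1) * P (cyl π s) ≤
      P (cyl (climb π s i) (s + (L + 1)) \ hitsFrom {x | x i ≤ L} (s + (L + 1))) := by
  set U := cyl (climb π s i) (s + (L + 1))
  set H := hitsFrom {x : Fin N → ℕ | x i ≤ L} (s + (L + 1))
  have hclimb : ENNReal.ofReal a ^ (L + 1) * P (cyl π s) ≤ P U := by
    have := IsMarkovChain.pow_mul_measure_cyl_le (Q := queueKernel lam mu) hchain (climb π s i) s
      (L + 1) fun k _ => by rw [climb_add_succ]; exact ENNReal.ofReal_le_ofReal (ha _)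
    rwa [cyl_congr fun u hu => climb_of_le π i hu] at this
  have hreturn : P (U ∩ H) ≤ ENNReal.ofReal ρ * P U := by
    refine (measure_cyl_inter_hitsFrom_le_pow hchain hlam hmu hρ0 hρ1 hmuρ _ _).trans ?_
    rw [climb_add, update_self, show π s i + (L + 1) - L = π s i + 1 by omega, pow_succ]
    gcongr
    exact mul_le_of_le_one_left hρ0 (pow_le_one₀ hρ0 hρ1)
  calc (1 - ENNReal.ofReal ρ) * ENNReal.ofReal a ^ (L + 1) * P (cyl π s)
      ≤ (1 - ENNReal.ofReal ρ) * P U := by rw [mul_assoc]; gcongr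
    _ = P U - ENNReal.ofReal ρ * P U := by
        rw [ENNReal.sub_mul fun _ _ => measure_ne_top _ _, one_mul]
    _ ≤ P U - P (U ∩ H) := by gcongr
    _ ≤ P (U \ H) := sdiff_self_inter (s := U) (t := H) ▸ le_measure_sdiff

theorem measure_visitsInfOften_le_eq_zero {P : Measure (ℕ → Fin N → ℕ)} [IsFiniteMeasure P]
    (hchain : IsQueueChain lam mu P) (hlam : ∀ j, 0 < lam j) (hmu : ∀ j x, 0 ≤ mu j x) {B : ℝ}
    (hB : ∀ j x, mu j x ≤ B) {i : Fin N} {ρ : ℝ} (hρ0 : 0 ≤ ρ) (hρ1 : ρ < 1) {L : ℕ}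
    (hmuρ : ∀ x : Fin N → ℕ, L < x i → mu i x ≤ ρ * lam i) :
    P (visitsInfOften {x : Fin N → ℕ | x i ≤ L}) = 0 := by
  obtain ⟨a, ha0, ha⟩ := exists_pos_le_queueKernel_up hlam hmu hB i
  refine measure_visitsInfOften_eq_zero (mul_ne_zero (tsub_pos_of_lt
    (ENNReal.ofReal_lt_one.2 hρ1)).ne' (pow_ne_zero _ (ENNReal.ofReal_pos.2 ha0).ne'))
    fun s π _ => ⟨climb π s i, L + 1, fun u hu => climb_of_le π i hu,
      le_measure_climb_sdiff_hitsFrom hchain hlam hmu ha hρ0 hρ1.le hmuρ π s⟩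

lemma exists_lt_one_mu_le_mul_lam {i : Fin N} {B : ℝ} (hmu : ∀ x, 0 < mu i x)
    (hB : ∀ x, mu i x ≤ B) (hlim : limsup (supAtLevel mu i) atTop < lam i) :
    ∃ ρ, 0 < ρ ∧ ρ < 1 ∧ ∃ L : ℕ, ∀ x : Fin N → ℕ, L < x i → mu i x ≤ ρ * lam i := by
  have hlevel : ∀ n, Nonempty {x : Fin N → ℕ // x i = n} := fun n =>
    ⟨⟨update 0 i n, update_self ..⟩⟩
  have hbdd : ∀ n, BddAbove (range fun x : {x : Fin N → ℕ // x i = n} => mu i x.1) :=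
    fun n => ⟨B, by rintro _ ⟨x, rfl⟩; exact hB x.1⟩
  have hle : ∀ x, mu i x ≤ supAtLevel mu i (x i) := fun x => le_ciSup (hbdd (x i)) ⟨x, rfl⟩
  have hsup : IsBoundedUnder (· ≤ ·) atTop (supAtLevel mu i) :=
    isBoundedUnder_of ⟨B, fun n => (hlevel n).elim fun _ => ciSup_le fun x => hB x.1⟩
  obtain ⟨c, hlc, hcl⟩ := exists_between hlim
  obtain ⟨L, hL⟩ := eventually_atTop.1 (eventually_lt_of_limsup_lt hlc hsup)
  have hc : ∀ x : Fin N → ℕ, L ≤ x i → mu i x < c := fun x hx => (hle x).trans_lt (hL _ hx)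
  have hc0 : 0 < c := (hmu _).trans (hc (update 0 i L) (by simp))
  have hlam : 0 < lam i := hc0.trans hcl
  refine ⟨c / lam i, div_pos hc0 hlam, (div_lt_one hlam).2 hcl, L, fun x hx => ?_⟩
  rw [div_mul_cancel₀ _ hlam.ne']
  exact (hc x hx.le).le

end QueueChain

open PathSpace QueueChain

/-- For `N` parallel queues with strictly positive arrival rates
`λ_i` and bounded strictly positive state-dependent service rates `μ_i`, if queue `i`
satisfies `λ_i > limsup_{x_i → ∞} sup_{x_j : j ≠ i} μ_i(x)`, then queue `i` is
unstable: for any initial state (no restriction is placed on the initial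
distribution), almost surely `X_i(t) → ∞`; in particular, almost surely there is a
time `T` such that `X_i(t) > 0` for all `t ≥ T`. -/
theorem queue_unstable
    {N : ℕ} (lam : Fin N → ℝ) (hlam : ∀ i, 0 < lam i)
    (mu : Fin N → (Fin N → ℕ) → ℝ)
    (hmu_pos : ∀ i x, 0 < mu i x)
    (hmu_bdd : ∃ B : ℝ, ∀ i x, mu i x ≤ B)
    (P : Measure (ℕ → Fin N → ℕ)) [IsProbabilityMeasure P]
    (hchain : IsQueueChain lam mu P)
    (i : Fin N)
    (hlimsup : limsup (supAtLevel mu i) atTop < lam i) :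
    P {ω | Tendsto (fun t => ω t i) atTop atTop} = 1 ∧
      P {ω | ∃ T : ℕ, ∀ t ≥ T, 0 < ω t i} = 1 := by
  obtain ⟨B, hB⟩ := hmu_bdd
  obtain ⟨ρ, hρ0, hρ1, L, hL⟩ := exists_lt_one_mu_le_mul_lam (hmu_pos i) (hB i) hlimsup
  have hnull : ∀ M : ℕ, P (visitsInfOften {x : Fin N → ℕ | x i ≤ M}) = 0 := fun M =>
    measure_mono_null (fun ω hω => hω.mono fun t ht => ht.trans (le_max_left M L))
      (measure_visitsInfOften_le_eq_zero hchain hlam (fun j x => (hmu_pos j x).le) hB hρ0.le hρ1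
        fun x hx => hL x ((le_max_right M L).trans_lt hx))
  have htendsto : ∀ᵐ ω ∂P, Tendsto (fun t => ω t i) atTop atTop := by
    refine measure_mono_null (fun ω hω => ?_) (measure_iUnion_null hnull)
    have hω' : ¬Tendsto (fun t => ω t i) atTop atTop := hω
    simp only [tendsto_atTop, not_forall, not_eventually, not_le] at hω'
    obtain ⟨M, hM⟩ := hω'
    exact mem_iUnion.2 ⟨M, hM.mono fun t ht => ht.le⟩
  have hpos : ∀ᵐ ω ∂P, ∃ T : ℕ, ∀ t ≥ T, 0 < ω t i :=
    htendsto.mono fun ω hω => eventually_atTop.1 (hω.eventually_gt_atTop 0)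
  exact ⟨(measure_congr (ae_eq_univ.2 htendsto)).trans measure_univ,
    (measure_congr (ae_eq_univ.2 hpos)).trans measure_univ⟩
end
end
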